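/- arXiv:1202.2013 — 3 statements merged into one kernel-verified Lean document; each statement's English description precedes it below -/
import Mathlib

section
/- Let n ≥ 1 and let T be a tree on the vertex set {0, 1, …, n} in which vertex n is a leaf. Let Lₙ be the n×n matrix obtained from the Laplacian of T by deleting the row and column indexed by n, and for 0 ≤ i ≤ n−1 set bᵢ = Σ_{j=0}^{n−1} (d(n,i) + d(n,j) − d(i,j))/2, where d is graph distance in T (so bᵢ is the sum over j of the distance from n to the path connecting i and j). Then for every natural number m, the number of integer vectors λ ∈ ℤⁿ satisfying Lₙ·λ ≥ 0 componentwise and λ₀ + λ₁ + ⋯ + λ_{n−1} = m equals the number of vectors y ∈ ℕⁿ with Σ_{i=0}^{n−1} bᵢ·yᵢ = m. (Equivalently, the generating function Σ_λ q^{|λ|} over such compositions equals 1/∏_{i=0}^{n−1}(1 − q^{bᵢ}).) -/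
/-!
In a tree, the matrix `C` of Gromov products `(u | v)_r = (d(r,u) + d(r,v) - d(u,v)) / 2`, the
distance from `r` to the path joining `u` and `v`, is the inverse of the Laplacian minor at `r`.
Around a vertex `v ≠ u` exactly one neighbour is closer to `u` and all the others are one step
farther, so the Laplacian applied to `d(u, ·)` is `2 - deg v` at `v` (and `-deg v` at `v = u`);
the degree terms cancel in `(· | k)_r`, leaving `[v = k] - [v = r]`. The numerator is even
because trees are bipartite, so `C` is an integer matrix and `λ ↦ Lₙ λ` is a bijection from the
constrained compositions onto `ℕⁿ`, with inverse `y ↦ C y`. Finally `|C y| = ∑ bᵢ yᵢ` because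
`bᵢ` is the `i`-th column sum of the symmetric matrix `C`.
-/

open Finset Matrix

namespace SimpleGraph

variable {V : Type*} {G : SimpleGraph V}

lemma IsTree.eq_penultimate_of_adj_of_dist_lt (hG : G.IsTree) {u v w : V} {p : G.Walk u v}
    (hp : p.IsPath) (hadj : G.Adj v w) (hlt : G.dist u w < G.dist u v) : w = p.penultimate := by
  obtain ⟨q, -, hq⟩ := hG.connected.exists_path_of_dist u w
  have hqv : (q.concat hadj.symm).length = G.dist u v := by
    rw [Walk.length_concat, hq]
    rcases hG.dist_eq_dist_add_one_of_adj u hadj with h | h <;> omega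
  have hpq : q.concat hadj.symm = p := congrArg Subtype.val <|
    (hG.isAcyclic.subsingleton_path u v).elim
      ⟨_, q.concat hadj.symm |>.isPath_of_length_eq_dist hqv⟩ ⟨p, hp⟩
  refine hG.isAcyclic.eq_penultimate_of_adj_end hp hadj ?_
  exact hpq ▸ q.support_subset_support_concat hadj.symm q.end_mem_support

lemma IsTree.card_filter_neighborFinset_dist_lt [DecidableEq V] (hG : G.IsTree) (u v : V)
    [Fintype (G.neighborSet v)] :
    #{w ∈ G.neighborFinset v | G.dist u w < G.dist u v} = if u = v then 0 else 1 := by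
  split_ifs with huv
  · simp [huv]
  obtain ⟨p, hp, hlen⟩ := hG.connected.exists_path_of_dist u v
  have hnil : ¬p.Nil := fun h => huv h.eq
  refine card_eq_one.mpr ⟨p.penultimate, ext fun w => ?_⟩
  simp only [mem_filter, mem_neighborFinset, mem_singleton]
  constructor
  · exact fun ⟨hadj, hlt⟩ => hG.eq_penultimate_of_adj_of_dist_lt hp hadj hlt
  · rintro rfl
    refine ⟨(p.adj_penultimate hnil).symm, ?_⟩
    calc G.dist u p.penultimate ≤ p.dropLast.length := dist_le _
      _ < p.length := by rw [← Walk.length_dropLast_add_one hnil]; omega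
      _ = G.dist u v := hlen

lemma IsTree.sum_dist_neighborFinset [DecidableEq V] (hG : G.IsTree) (u v : V)
    [Fintype (G.neighborSet v)] :
    ∑ w ∈ G.neighborFinset v, (G.dist u w : ℤ) =
      G.degree v * (G.dist u v + 1) - if u = v then 0 else 2 := by
  have hstep : ∀ w ∈ G.neighborFinset v, (G.dist u w : ℤ) =
      (G.dist u v + 1) - 2 * if G.dist u w < G.dist u v then 1 else 0 := by
    intro w hw
    rcases hG.dist_eq_dist_add_one_of_adj u ((mem_neighborFinset _ _ _).1 hw) with h | h <;>
      split_ifs <;> omega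
  rw [sum_congr rfl hstep, sum_sub_distrib, ← mul_sum, sum_boole, sum_const,
    card_neighborFinset_eq_degree, hG.card_filter_neighborFinset_dist_lt, nsmul_eq_mul]
  split_ifs <;> simp

lemma IsTree.even_dist_add_dist_add_dist (hG : G.IsTree) (r u v : V) :
    Even (G.dist r u + G.dist r v + G.dist u v) := by
  obtain ⟨p, hp⟩ := hG.connected.exists_walk_length_eq_dist u v
  rw [← hp, Nat.even_iff]
  clear hp
  induction p with
  | nil => rw [Walk.length_nil]; omega
  | cons hadj p ih =>
    rw [Walk.length_cons]
    rcases hG.dist_eq_dist_add_one_of_adj r hadj with h | h <;> omega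

/-- The Gromov product `(u | v)_r`. The integer division truncates in general but is exact on
trees, see `IsTree.two_mul_gromovProduct`. -/
noncomputable def gromovProduct (G : SimpleGraph V) (r u v : V) : ℤ :=
  ((G.dist r u : ℤ) + G.dist r v - G.dist u v) / 2

lemma gromovProduct_comm (r u v : V) : G.gromovProduct r u v = G.gromovProduct r v u := by
  rw [gromovProduct, gromovProduct, dist_comm (u := u), add_comm (G.dist r u : ℤ)]

@[simp]
lemma gromovProduct_self_left (r v : V) : G.gromovProduct r r v = 0 := by
  simp [gromovProduct]

lemma IsTree.two_mul_gromovProduct (hG : G.IsTree) (r u v : V) :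
    2 * G.gromovProduct r u v = G.dist r u + G.dist r v - G.dist u v := by
  refine Int.mul_ediv_cancel' ?_
  have := (hG.even_dist_add_dist_add_dist r u v).two_dvd
  omega

lemma IsTree.cast_gromovProduct {K : Type*} [Field K] [CharZero K] (hG : G.IsTree)
    (r u v : V) :
    (G.gromovProduct r u v : K) = ((G.dist r u : K) + G.dist r v - G.dist u v) / 2 := by
  have h := congrArg (Int.cast : ℤ → K) (hG.two_mul_gromovProduct r u v)
  push_cast at h
  rw [eq_div_iff two_ne_zero, ← h, mul_comm]

section Laplacian

variable [Fintype V] [DecidableEq V] [DecidableRel G.Adj]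

lemma lapMatrix_apply {R : Type*} [AddGroupWithOne R] (u v : V) :
    G.lapMatrix R u v = if u = v then (G.degree u : R) else if G.Adj u v then -1 else 0 := by
  by_cases huv : u = v
  · subst huv
    simp [lapMatrix, degMatrix]
  · by_cases hadj : G.Adj u v <;> simp [lapMatrix, degMatrix, huv, hadj]

lemma lapMatrix_submatrix_of_injective {ι R : Type*} [DecidableEq ι] [AddGroupWithOne R]
    {f : ι → V} (hf : f.Injective) :
    (G.lapMatrix R).submatrix f f = Matrix.of fun i j =>
      if i = j then (G.degree (f i) : R) else if G.Adj (f i) (f j) then -1 else 0 := by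
  ext i j
  simp [lapMatrix_apply, hf.eq_iff]

lemma IsTree.lapMatrix_mul_gromovProduct (hG : G.IsTree) (r v k : V) :
    (G.lapMatrix ℤ * Matrix.of (G.gromovProduct r)) v k =
      (if v = k then 1 else 0) - if v = r then 1 else 0 := by
  change (G.lapMatrix ℤ *ᵥ fun w => G.gromovProduct r w k) v = _
  rw [lapMatrix_mulVec_apply]
  refine mul_left_cancel₀ (two_ne_zero (α := ℤ)) ?_
  have hnbr : ∑ w ∈ G.neighborFinset v, 2 * G.gromovProduct r w k =
      ∑ w ∈ G.neighborFinset v, (G.dist r w : ℤ) + G.degree v * G.dist r k -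
        ∑ w ∈ G.neighborFinset v, (G.dist k w : ℤ) := by
    simp only [hG.two_mul_gromovProduct, sum_sub_distrib, sum_add_distrib, sum_const,
      card_neighborFinset_eq_degree, nsmul_eq_mul]
    congr 1
    exact sum_congr rfl fun w _ => by rw [dist_comm]
  rw [mul_sub, mul_sum, mul_left_comm, hG.two_mul_gromovProduct, hnbr,
    hG.sum_dist_neighborFinset, hG.sum_dist_neighborFinset, dist_comm (u := v) (v := k)]
  simp only [eq_comm (a := v)]
  split_ifs <;> ring

end Laplacian

lemma IsTree.lapMatrix_submatrix_castSucc_mul_gromovProduct {n : ℕ}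
    {G : SimpleGraph (Fin (n + 1))} [DecidableRel G.Adj] (hG : G.IsTree) :
    (G.lapMatrix ℤ).submatrix Fin.castSucc Fin.castSucc *
      (Matrix.of (G.gromovProduct (Fin.last n))).submatrix Fin.castSucc Fin.castSucc = 1 := by
  ext i k
  have h := hG.lapMatrix_mul_gromovProduct (Fin.last n) i.castSucc k.castSucc
  rw [mul_apply, Fin.sum_univ_castSucc] at h
  simpa [mul_apply, one_apply, (Fin.castSucc_lt_last i).ne] using h

end SimpleGraph

namespace Matrix

variable {ι : Type*} [Fintype ι]

lemma sum_mulVec_eq_sum_colSum (C : Matrix ι ι ℤ) (x : ι → ℤ) :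
    ∑ j, (C *ᵥ x) j = ∑ i, (∑ j, C j i) * x i := by
  simp only [mulVec, dotProduct, sum_mul]
  exact sum_comm

theorem ncard_nonneg_mulVec_eq_ncard_colSum [DecidableEq ι] {L C : Matrix ι ι ℤ}
    (hLC : L * C = 1) (m : ℤ) :
    {lam : ι → ℤ | (∀ i, 0 ≤ (L *ᵥ lam) i) ∧ ∑ i, lam i = m}.ncard =
      {y : ι → ℕ | ∑ i, (∑ j, C j i) * (y i : ℤ) = m}.ncard := by
  have hCL : C * L = 1 := mul_eq_one_comm.mp hLC
  symm
  refine Set.ncard_congr (fun y _ => C *ᵥ fun i => (y i : ℤ)) ?_ ?_ ?_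
  · intro y hy
    refine ⟨fun i => ?_, ?_⟩
    · rw [mulVec_mulVec, hLC, one_mulVec]
      positivity
    · rwa [sum_mulVec_eq_sum_colSum]
  · intro y y' _ _ h
    have h' := congrArg (L *ᵥ ·) h
    simp only [mulVec_mulVec, hLC, one_mulVec] at h'
    exact funext fun i => by exact_mod_cast congrFun h' i
  · rintro lam ⟨hpos, hsum⟩
    have hy : (fun i => (((L *ᵥ lam) i).toNat : ℤ)) = L *ᵥ lam :=
      funext fun i => Int.toNat_of_nonneg (hpos i)
    refine ⟨fun i => ((L *ᵥ lam) i).toNat, ?_, ?_⟩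
    · rw [Set.mem_ofPred_eq, ← sum_mulVec_eq_sum_colSum, hy, mulVec_mulVec, hCL, one_mulVec,
        hsum]
    · rw [hy, mulVec_mulVec, hCL, one_mulVec]

end Matrix

theorem tree_laplacian_minor_generating_function_general (n : ℕ)
    (G : SimpleGraph (Fin (n + 1))) [DecidableRel G.Adj]
    (hconn : G.Connected) (hacyc : G.IsAcyclic) (m : ℕ) :
    {lam : Fin n → ℤ |
        (∀ i, 0 ≤ (Matrix.of fun i j : Fin n =>
            (if i = j then (G.degree i.castSucc : ℤ)
              else if G.Adj i.castSucc j.castSucc then -1 else 0)).mulVec lam i) ∧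
        ∑ i, lam i = (m : ℤ)}.ncard =
      {y : Fin n → ℕ |
        ∑ i : Fin n, (∑ j : Fin n, ((G.dist (Fin.last n) i.castSucc : ℚ)
              + (G.dist (Fin.last n) j.castSucc : ℚ)
              - (G.dist i.castSucc j.castSucc : ℚ)) / 2) * (y i : ℚ) = (m : ℚ)}.ncard := by
  have hG : G.IsTree := ⟨hconn, hacyc⟩
  rw [← G.lapMatrix_submatrix_of_injective (Fin.castSucc_injective n),
    Matrix.ncard_nonneg_mulVec_eq_ncard_colSum hG.lapMatrix_submatrix_castSucc_mul_gromovProduct]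
  have hweight : ∀ i : Fin n, ∑ j : Fin n, ((G.dist (Fin.last n) i.castSucc : ℚ)
      + G.dist (Fin.last n) j.castSucc - G.dist i.castSucc j.castSucc) / 2 =
      ∑ j : Fin n, (G.gromovProduct (Fin.last n) j.castSucc i.castSucc : ℚ) :=
    fun i => sum_congr rfl fun j _ => by
      rw [SimpleGraph.gromovProduct_comm, hG.cast_gromovProduct]
  simp only [hweight]
  norm_cast

/-- For a tree `T` on `{0, …, n}` with `n` a leaf, the number of
compositions constrained by the Laplacian minor at `n` with `|λ| = m` equals the
number of `y ∈ ℕⁿ` with `Σ bᵢ yᵢ = m`, where `bᵢ` is the sum over `j` of the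
distance from `n` to the path connecting `i` and `j`. -/
theorem tree_laplacian_minor_generating_function (n : ℕ) (hn : 1 ≤ n)
    (G : SimpleGraph (Fin (n + 1))) [DecidableRel G.Adj]
    (hconn : G.Connected) (hacyc : G.IsAcyclic)
    (hleaf : G.degree (Fin.last n) = 1) (m : ℕ) :
    {lam : Fin n → ℤ |
        (∀ i, 0 ≤ (Matrix.of fun i j : Fin n =>
            (if i = j then (G.degree i.castSucc : ℤ)
              else if G.Adj i.castSucc j.castSucc then -1 else 0)).mulVec lam i) ∧
        ∑ i, lam i = (m : ℤ)}.ncard =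
      {y : Fin n → ℕ |
        ∑ i : Fin n, (∑ j : Fin n, ((G.dist (Fin.last n) i.castSucc : ℚ)
              + (G.dist (Fin.last n) j.castSucc : ℚ)
              - (G.dist i.castSucc j.castSucc : ℚ)) / 2) * (y i : ℚ) = (m : ℚ)}.ncard :=
  tree_laplacian_minor_generating_function_general n G hconn hacyc m
end

section
/- Let n ≥ 3 and let Lₙ be the n×n integer matrix with rows and columns indexed by 0, …, n−1 given by: (Lₙ)_{0,0} = 3, (Lₙ)_{i,i} = 2 for 1 ≤ i ≤ n−1, (Lₙ)_{i,j} = −1 when |i−j| = 1 or {i,j} = {0, n−1}, and 0 otherwise. Define the rational n×n matrix B = (b_{i,j}) by b_{i,j} = i(n−j)/n + 1 if i ≤ j and b_{i,j} = j(n−i)/n + 1 if i > j, for 0 ≤ i, j ≤ n−1. Then Lₙ·B = I; that is, Lₙ is invertible with Lₙ⁻¹ = B. In particular, every entry of the 0-th row and of the 0-th column of Lₙ⁻¹ equals 1. -/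
/-! Lₙ is the Laplacian of the `n`-cycle plus the matrix unit `E₀₀`, and `B = G + 𝟙𝟙ᵀ` where
`G i j = min i j * (n - max i j) / n` is the Green's function of the path `0, 1, …, n` with
Dirichlet conditions at both ends. The cycle Laplacian kills constants, and `G` vanishes at `0`
and at `n`, so the cyclic step from `n - 1` to `0` looks to `G` like the step to `n`: row `i ≠ 0`
of `Lₙ B` is the second difference of `G`, which is `δᵢⱼ`. In row `0` the Laplacian contributes
`-G 1 j - G (n - 1) j = -1` for `j ≠ 0`, cancelled by the `1` coming from `E₀₀ 𝟙𝟙ᵀ`. -/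

/-- The Laplacian minor (at the leaf) of the leafed `n`-cycle, over `ℚ`:
`(Lₙ)₀₀ = 3`, diagonal `2` elsewhere, `−1` between cyclically adjacent vertices. -/
def leafedCycleLaplacianMinorQ (n : ℕ) : Matrix (Fin n) (Fin n) ℚ :=
  Matrix.of fun i j =>
    if i = j then (if i.val = 0 then 3 else 2)
    else if i.val + 1 = j.val ∨ j.val + 1 = i.val ∨
        (i.val = 0 ∧ j.val = n - 1) ∨ (j.val = 0 ∧ i.val = n - 1) then -1
    else 0

open Matrix SimpleGraph

namespace SimpleGraph

theorem cycleGraph_adj_iff_val {n : ℕ} {u v : Fin (n + 2)} :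
    (cycleGraph (n + 2)).Adj u v ↔ u.val + 1 = v.val ∨ v.val + 1 = u.val ∨
      (u.val = 0 ∧ v.val = n + 1) ∨ (v.val = 0 ∧ u.val = n + 1) := by
  have := u.isLt
  have := v.isLt
  rw [cycleGraph_adj']
  rcases lt_trichotomy u v with h | rfl | h
  · rw [Fin.coe_sub_iff_lt.mpr h, Fin.sub_val_of_le h.le]
    rw [Fin.lt_def] at h
    omega
  · simp only [sub_self, Fin.val_zero]
    omega
  · rw [Fin.coe_sub_iff_lt.mpr h, Fin.sub_val_of_le h.le]
    rw [Fin.lt_def] at h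
    omega

theorem lapMatrix_cycleGraph_mulVec_apply {R : Type*} [NonAssocRing R] {n : ℕ}
    (v : Fin (n + 3) → R) (i : Fin (n + 3)) :
    ((cycleGraph (n + 3)).lapMatrix R *ᵥ v) i = 2 * v i - v (i - 1) - v (i + 1) := by
  have hne : i - 1 ≠ i + 1 := by
    rw [Ne, sub_eq_iff_eq_add, add_assoc, left_eq_add, Fin.ext_iff, Fin.val_add, Fin.val_one,
      Fin.val_zero, Nat.mod_eq_of_lt (by omega)]
    omega
  rw [lapMatrix_mulVec_apply, cycleGraph_degree_three_le, cycleGraph_neighborFinset,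
    Finset.sum_pair hne]
  push_cast
  abel

end SimpleGraph

theorem leafedCycleLaplacianMinorQ_eq (n : ℕ) :
    leafedCycleLaplacianMinorQ (n + 3) = (cycleGraph (n + 3)).lapMatrix ℚ + single 0 0 1 := by
  ext i j
  simp only [leafedCycleLaplacianMinorQ, lapMatrix, degMatrix, of_apply, Matrix.add_apply,
    Matrix.sub_apply, diagonal_apply, adjMatrix_apply, single_apply, cycleGraph_degree_three_le,
    cycleGraph_adj_iff_val (n := n + 1), Fin.ext_iff, Fin.val_zero]
  split_ifs <;> first | omega | norm_num

theorem leafedCycleLaplacianMinorQ_mulVec_apply {n : ℕ} (v : Fin (n + 3) → ℚ) (i : Fin (n + 3)) :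
    (leafedCycleLaplacianMinorQ (n + 3) *ᵥ v) i =
      2 * v i - v (i - 1) - v (i + 1) + if i = 0 then v 0 else 0 := by
  rw [leafedCycleLaplacianMinorQ_eq, add_mulVec, Pi.add_apply, lapMatrix_cycleGraph_mulVec_apply,
    single_mulVec, Function.update_apply, Pi.zero_apply, one_mul]

def pathGreen (K : Type*) [Field K] (n i j : ℕ) : K :=
  if i ≤ j then i * (n - j) / n else j * (n - i) / n

section pathGreen

variable {K : Type*} [Field K] {n : ℕ}

theorem pathGreen_of_le {i j : ℕ} (h : i ≤ j) : pathGreen K n i j = i * (n - j) / n :=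
  if_pos h

theorem pathGreen_of_ge {i j : ℕ} (h : j ≤ i) : pathGreen K n i j = j * (n - i) / n := by
  rcases h.eq_or_lt with rfl | h
  · exact if_pos le_rfl
  · exact if_neg h.not_ge

@[simp]
theorem pathGreen_zero_left (j : ℕ) : pathGreen K n 0 j = 0 := by
  simp [pathGreen_of_le (Nat.zero_le j)]

@[simp]
theorem pathGreen_zero_right (i : ℕ) : pathGreen K n i 0 = 0 := by
  simp [pathGreen_of_ge (Nat.zero_le i)]

theorem pathGreen_self_left {j : ℕ} (hj : j ≤ n) : pathGreen K n n j = 0 := by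
  simp [pathGreen_of_ge hj]

theorem pathGreen_add_pathGreen_add_two (hn : (n : K) ≠ 0) (i j : ℕ) :
    pathGreen K n i j + pathGreen K n (i + 2) j =
      2 * pathGreen K n (i + 1) j - if i + 1 = j then 1 else 0 := by
  rcases lt_trichotomy (i + 1) j with h | rfl | h
  · rw [pathGreen_of_le (by omega), pathGreen_of_le h, pathGreen_of_le h.le, if_neg h.ne]
    push_cast
    ring
  · rw [pathGreen_of_le (by omega), pathGreen_of_ge (by omega), pathGreen_of_le le_rfl, if_pos rfl]
    push_cast
    field_simp
    ring
  · rw [pathGreen_of_ge (by omega), pathGreen_of_ge (by omega), pathGreen_of_ge h.le,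
      if_neg h.ne']
    push_cast
    ring

theorem pathGreen_one_add_pathGreen_sub_one (hn : (n : K) ≠ 0) {j : ℕ} (hj₀ : 0 < j)
    (hjn : j < n) : pathGreen K n 1 j + pathGreen K n (n - 1) j = 1 := by
  rw [pathGreen_of_le hj₀, pathGreen_of_ge (by omega), Nat.cast_sub (by omega)]
  push_cast
  field_simp
  ring

theorem pathGreen_val_add_one (i j : Fin (n + 1)) :
    pathGreen K (n + 1) (i + 1).val j = pathGreen K (n + 1) (i.val + 1) j := by
  rw [Fin.val_add_one]
  split_ifs with h
  · rw [h, Fin.val_last, pathGreen_zero_left, pathGreen_self_left j.is_lt.le]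
  · rfl

end pathGreen

theorem leafedCycleLaplacianMinorQ_mul_pathGreen_add_one (n : ℕ) :
    leafedCycleLaplacianMinorQ (n + 3) *
      Matrix.of (fun i j : Fin (n + 3) => pathGreen ℚ (n + 3) i j + 1) = 1 := by
  have hn : ((n + 3 : ℕ) : ℚ) ≠ 0 := by positivity
  ext i j
  change (leafedCycleLaplacianMinorQ (n + 3) *ᵥ fun k => pathGreen ℚ (n + 3) k j + 1) i = _
  rw [leafedCycleLaplacianMinorQ_mulVec_apply, pathGreen_val_add_one, one_apply]
  simp only [show n + 2 + 1 = n + 3 from rfl]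
  rcases eq_or_ne i 0 with rfl | hi
  · rcases eq_or_ne j 0 with rfl | hj
    · norm_num
    · have := pathGreen_one_add_pathGreen_sub_one hn (Fin.pos_iff_ne_zero.mpr hj) j.is_lt
      rw [if_pos rfl, if_neg hj.symm, Fin.val_zero, Fin.coe_sub_one, if_pos rfl,
        pathGreen_zero_left]
      rw [show n + 3 - 1 = n + 2 from rfl] at this
      linear_combination -this
  · obtain ⟨k, hk⟩ : ∃ k, i.val = k + 1 := Nat.exists_eq_succ_of_ne_zero (Fin.val_ne_iff.mpr hi)
    rw [if_neg hi]
    simp only [Fin.val_sub_one_of_ne_zero hi, Fin.ext_iff, hk, Nat.add_sub_cancel]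
    linear_combination -pathGreen_add_pathGreen_add_two hn k j

/-- The inverse of the Laplacian minor of the leafed `n`-cycle is
`b_{i,j} = i(n−j)/n + 1` for `i ≤ j` and `j(n−i)/n + 1` for `i > j`;
in particular every entry of its `0`-th row and `0`-th column equals `1`. -/
theorem leafed_cycle_laplacian_minor_inverse (n : ℕ) (hn : 3 ≤ n) :
    leafedCycleLaplacianMinorQ n *
        (Matrix.of fun i j : Fin n =>
          if i.val ≤ j.val then (i.val : ℚ) * ((n : ℚ) - (j.val : ℚ)) / (n : ℚ) + 1
          else (j.val : ℚ) * ((n : ℚ) - (i.val : ℚ)) / (n : ℚ) + 1) = 1 ∧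
    (∀ j : Fin n,
      (Matrix.of fun i j : Fin n =>
          if i.val ≤ j.val then (i.val : ℚ) * ((n : ℚ) - (j.val : ℚ)) / (n : ℚ) + 1
          else (j.val : ℚ) * ((n : ℚ) - (i.val : ℚ)) / (n : ℚ) + 1)
        ⟨0, by omega⟩ j = 1) ∧
    (∀ i : Fin n,
      (Matrix.of fun i j : Fin n =>
          if i.val ≤ j.val then (i.val : ℚ) * ((n : ℚ) - (j.val : ℚ)) / (n : ℚ) + 1
          else (j.val : ℚ) * ((n : ℚ) - (i.val : ℚ)) / (n : ℚ) + 1)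
        i ⟨0, by omega⟩ = 1) := by
  obtain ⟨m, rfl⟩ : ∃ m, n = m + 3 := ⟨n - 3, by omega⟩
  simp only [← ite_add, ← pathGreen.eq_1]
  exact ⟨leafedCycleLaplacianMinorQ_mul_pathGreen_add_one m, fun j => by simp, fun i => by simp⟩
end

section
/- Let n ≥ 3 be a prime and let m be a positive integer with gcd(m, n) = 1 (equivalently, n does not divide m). Let Lₙ be the n×n Laplacian minor of the leafed n-cycle. Then the number of integer vectors λ ∈ ℤⁿ satisfying Lₙ·λ ≥ 0 componentwise and λ₀ = m equals the number of equivalence classes of compositions of m into n nonnegative parts under cyclic shift; that is, it equals the cardinality of the quotient of the set {c : ℤ/nℤ → ℕ : Σⱼ c(j) = m} by the equivalence relation c ∼ c′ iff there exists k ∈ ℤ/nℤ with c′(j) = c(j+k) for all j. -/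
def leafedCycleLaplacianMinor (n : ℕ) : Matrix (Fin n) (Fin n) ℤ :=
  Matrix.of fun i j =>
    if i = j then (if i.val = 0 then 3 else 2)
    else if i.val + 1 = j.val ∨ j.val + 1 = i.val ∨
        (i.val = 0 ∧ j.val = n - 1) ∨ (j.val = 0 ∧ i.val = n - 1) then -1
    else 0

/-!
Write `L` for the matrix and `c = L v`. Since `L` is symmetric with `L 1 = e₀` and
`L (i ↦ i) = n (e_{n-1} - e₀)`, we get `∑ cᵢ = v₀` and `∑ i cᵢ = n (v_{n-1} - v₀)`, so `n ∣ ∑ i cᵢ`.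
The quadratic form `vᵀ L v = v₀² + ∑ (vᵢ - vᵢ₊₁)²` makes `L` injective, and every integer `c` with
`n ∣ ∑ i cᵢ` has an explicit integer preimage. Hence the cone points with `v₀ = m` correspond to the
compositions `c` of `m` with `∑ i cᵢ ≡ 0 (mod n)`. A cyclic shift by `k` changes `∑ i cᵢ` by
`-k m (mod n)`; as `m` is a unit mod `n`, each cyclic class contains exactly one such composition.
-/

open Finset Matrix

section CyclicShift

variable {n : ℕ}

def cyclicWeight (c : Fin n → ℕ) : ZMod n := ∑ j, (j.val : ZMod n) * c j

theorem cyclicWeight_eq_zero_iff (c : Fin n → ℕ) :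
    cyclicWeight c = 0 ↔ n ∣ ∑ j, j.val * c j := by
  rw [← ZMod.natCast_eq_zero_iff, cyclicWeight]
  push_cast
  rfl

theorem cyclicWeight_comp_add_right [NeZero n] (c : Fin n → ℕ) (k : Fin n) :
    cyclicWeight (fun j => c (j + k)) =
      cyclicWeight c - (k.val : ZMod n) * ∑ j, (c j : ZMod n) := by
  have hval : ∀ j : Fin n, ((j + k).val : ZMod n) = j.val + k.val := fun j => by
    rw [Fin.val_add, ZMod.natCast_mod, Nat.cast_add]
  symm
  rw [cyclicWeight, cyclicWeight, mul_sum, ← sum_sub_distrib,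
    ← Equiv.sum_comp (Equiv.addRight k)]
  refine sum_congr rfl fun j _ => ?_
  simp only [Equiv.coe_addRight, hval]
  ring

theorem cyclicShift_equivalence [NeZero n] (m : ℕ) :
    Equivalence (fun c c' : {c : Fin n → ℕ // ∑ j, c j = m} =>
      ∃ k : Fin n, ∀ j, c'.1 j = c.1 (j + k)) where
  refl _ := ⟨0, fun j => by rw [add_zero]⟩
  symm := fun ⟨k, hk⟩ => ⟨-k, fun j => by rw [hk, neg_add_cancel_right]⟩
  trans := fun ⟨k, hk⟩ ⟨l, hl⟩ => ⟨l + k, fun j => by rw [hl, hk, add_assoc]⟩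

theorem card_balanced_eq_card_quot_cyclicShift [NeZero n] (m : ℕ) (hm : m.Coprime n) :
    Nat.card {c : Fin n → ℕ // ∑ j, c j = m ∧ n ∣ ∑ j, j.val * c j} =
      Nat.card (Quot (fun c c' : {c : Fin n → ℕ // ∑ j, c j = m} =>
        ∃ k : Fin n, ∀ j, c'.1 j = c.1 (j + k))) := by
  set u := ZMod.unitOfCoprime m hm
  have hsum : ∀ c : Fin n → ℕ, ∑ j, c j = m → ∑ j, (c j : ZMod n) = u := fun c hc => by
    rw [ZMod.coe_unitOfCoprime, ← hc, Nat.cast_sum]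
  refine Nat.card_eq_of_bijective (fun c => Quot.mk _ ⟨c.1, c.2.1⟩) ⟨?_, ?_⟩
  · rintro ⟨c, hc, hcw⟩ ⟨d, hd, hdw⟩ h
    obtain ⟨k, hk⟩ := (cyclicShift_equivalence m).eqvGen_iff.1 (Quot.eqvGen_exact h)
    have hw := cyclicWeight_comp_add_right c k
    rw [← funext hk, (cyclicWeight_eq_zero_iff c).2 hcw, (cyclicWeight_eq_zero_iff d).2 hdw,
      hsum c hc, zero_sub, zero_eq_neg, Units.mul_left_eq_zero, ZMod.natCast_eq_zero_iff] at hw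
    have hk0 : k = 0 := Fin.ext (Nat.eq_zero_of_dvd_of_lt hw k.isLt)
    simp only [hk0, add_zero] at hk
    exact Subtype.ext (funext hk).symm
  · rintro ⟨⟨c, hc⟩⟩
    set k : Fin n := ⟨(cyclicWeight c * u⁻¹ : ZMod n).val, ZMod.val_lt _⟩
    have hk : (k.val : ZMod n) = cyclicWeight c * u⁻¹ := ZMod.natCast_zmod_val _
    refine ⟨⟨fun j => c (j + k), ?_, ?_⟩, (Quot.sound ⟨k, fun _ => rfl⟩).symm⟩
    · rw [← hc]
      exact Equiv.sum_comp (Equiv.addRight k) c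
    · rw [← cyclicWeight_eq_zero_iff, cyclicWeight_comp_add_right, hsum c hc, hk, mul_assoc,
        Units.inv_mul, mul_one, sub_self]

end CyclicShift

theorem apply_eq_apply_zero_of_forall_apply_add_one {n : ℕ} {α : Type*} (f : Fin (n + 1) → α)
    (h : ∀ i, f (i + 1) = f i) (i : Fin (n + 1)) : f i = f 0 := by
  induction i using Fin.induction with
  | zero => rfl
  | succ i ih => rw [← Fin.coeSucc_eq_succ, h, ih]

theorem leafedCycleLaplacianMinor_isSymm (n : ℕ) : (leafedCycleLaplacianMinor n).IsSymm :=
  IsSymm.ext fun i j => by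
    simp only [leafedCycleLaplacianMinor, of_apply, eq_comm (a := i)]
    grind

section LeafedCycle

variable {n : ℕ}

theorem leafedCycleLaplacianMinor_apply (hn : 2 ≤ n) (i j : Fin (n + 1)) :
    leafedCycleLaplacianMinor (n + 1) i j =
      (Pi.single i 2 - Pi.single (i + 1) 1 - Pi.single (i - 1) 1 +
        if i = 0 then Pi.single 0 1 else 0 : Fin (n + 1) → ℤ) j := by
  simp only [leafedCycleLaplacianMinor, of_apply, Pi.add_apply, Pi.sub_apply, Nat.add_sub_cancel,
    Pi.single_apply, Fin.ext_iff, Fin.val_add_one, Fin.coe_sub_one, Fin.val_last, Fin.val_zero,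
    apply_ite (fun f : Fin (n + 1) → ℤ => f j), Pi.zero_apply]
  split_ifs <;> omega

theorem leafedCycleLaplacianMinor_mulVec (hn : 2 ≤ n) (v : Fin (n + 1) → ℤ) (i : Fin (n + 1)) :
    (leafedCycleLaplacianMinor (n + 1) *ᵥ v) i =
      2 * v i - v (i + 1) - v (i - 1) + if i = 0 then v 0 else 0 := by
  have hrow : (fun j => leafedCycleLaplacianMinor (n + 1) i j) = _ :=
    funext (leafedCycleLaplacianMinor_apply hn i)
  rw [mulVec, hrow]
  split_ifs <;> simp [add_dotProduct, sub_dotProduct, single_dotProduct]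

theorem leafedCycleLaplacianMinor_mulVec_one (hn : 2 ≤ n) :
    leafedCycleLaplacianMinor (n + 1) *ᵥ 1 = Pi.single 0 1 := by
  ext i
  rw [leafedCycleLaplacianMinor_mulVec hn]
  by_cases hi : i = 0 <;> simp [hi]

theorem leafedCycleLaplacianMinor_mulVec_val (hn : 2 ≤ n) :
    leafedCycleLaplacianMinor (n + 1) *ᵥ (fun i => (i.val : ℤ)) =
      Pi.single (Fin.last n) (n + 1 : ℤ) - Pi.single 0 (n + 1 : ℤ) := by
  ext i
  rw [leafedCycleLaplacianMinor_mulVec hn]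
  simp only [Pi.sub_apply, Pi.single_apply, Fin.ext_iff, Fin.val_add_one, Fin.coe_sub_one,
    Fin.val_last, Fin.val_zero]
  split_ifs <;> push_cast <;> omega

theorem sum_leafedCycleLaplacianMinor_mulVec (hn : 2 ≤ n) (v : Fin (n + 1) → ℤ) :
    ∑ i, (leafedCycleLaplacianMinor (n + 1) *ᵥ v) i = v 0 := by
  rw [← one_dotProduct, dotProduct_mulVec, ← mulVec_transpose,
    (leafedCycleLaplacianMinor_isSymm _).eq, leafedCycleLaplacianMinor_mulVec_one hn,
    single_one_dotProduct]

theorem sum_val_mul_leafedCycleLaplacianMinor_mulVec (hn : 2 ≤ n) (v : Fin (n + 1) → ℤ) :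
    ∑ i, (i.val : ℤ) * (leafedCycleLaplacianMinor (n + 1) *ᵥ v) i =
      (n + 1) * (v (Fin.last n) - v 0) := by
  rw [← dotProduct, dotProduct_mulVec, ← mulVec_transpose,
    (leafedCycleLaplacianMinor_isSymm _).eq, leafedCycleLaplacianMinor_mulVec_val hn,
    sub_dotProduct, single_dotProduct, single_dotProduct, mul_sub]

theorem dotProduct_leafedCycleLaplacianMinor_mulVec_self (hn : 2 ≤ n) (v : Fin (n + 1) → ℤ) :
    v ⬝ᵥ (leafedCycleLaplacianMinor (n + 1) *ᵥ v) = v 0 ^ 2 + ∑ i, (v i - v (i + 1)) ^ 2 := by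
  have hsq : ∑ i, v (i + 1) ^ 2 = ∑ i, v i ^ 2 := Equiv.sum_comp (Equiv.addRight 1) (v · ^ 2)
  have hprev : ∑ i, v i * v (i - 1) = ∑ i, v i * v (i + 1) := by
    refine (Fintype.sum_equiv (Equiv.addRight 1) _ _ fun i => ?_).symm
    simp only [Equiv.coe_addRight, add_sub_cancel_right, mul_comm]
  simp only [dotProduct, leafedCycleLaplacianMinor_mulVec hn, mul_add, mul_sub, mul_ite, mul_zero,
    sub_sq, sum_add_distrib, sum_sub_distrib, sum_ite_eq', mem_univ, if_true, hsq, hprev]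
  simp only [mul_assoc, mul_left_comm (v _) 2, ← mul_sum, ← sq]
  ring

theorem leafedCycleLaplacianMinor_mulVec_injective (hn : 2 ≤ n) :
    Function.Injective (leafedCycleLaplacianMinor (n + 1)).mulVec := by
  intro v w hvw
  set u := v - w
  have hu : u ⬝ᵥ (leafedCycleLaplacianMinor (n + 1) *ᵥ u) = 0 := by
    simp [u, mulVec_sub, hvw]
  rw [dotProduct_leafedCycleLaplacianMinor_mulVec_self hn] at hu
  have hnonneg : ∀ i ∈ univ, 0 ≤ (u i - u (i + 1)) ^ 2 := fun i _ => sq_nonneg _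
  obtain ⟨h0, hdiff⟩ := (add_eq_zero_iff_of_nonneg (sq_nonneg _) (sum_nonneg hnonneg)).1 hu
  have hstep : ∀ i, u (i + 1) = u i := fun i => by
    have := (sum_eq_zero_iff_of_nonneg hnonneg).1 hdiff i (mem_univ i)
    linarith [pow_eq_zero_iff two_ne_zero |>.1 this]
  ext i
  have := apply_eq_apply_zero_of_forall_apply_add_one u hstep i
  rw [pow_eq_zero_iff two_ne_zero |>.1 h0] at this
  exact sub_eq_zero.1 this

/-- Read at `x = i`, this is the preimage of `c`. It has second differences `-c` (the ramp
`max (x - j) 0` has its kink at `j`) and value `∑ c` at `0`; the slope makes it return to `∑ c` at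
`x = n + 1`, provided `n + 1 ∣ ∑ j cⱼ` so that the integer division is exact. -/
def leafedCyclePotential (c : Fin (n + 1) → ℤ) (x : ℤ) : ℤ :=
  (∑ j, c j) * (1 + x) - x * ((∑ j, (j.val : ℤ) * c j) / (n + 1)) - ∑ j, max (x - j.val) 0 * c j

theorem leafedCyclePotential_zero (c : Fin (n + 1) → ℤ) :
    leafedCyclePotential c 0 = ∑ j, c j := by
  simp [leafedCyclePotential]

theorem leafedCyclePotential_card (c : Fin (n + 1) → ℤ)
    (hc : (n + 1 : ℤ) ∣ ∑ j, (j.val : ℤ) * c j) :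
    leafedCyclePotential c (n + 1) = ∑ j, c j := by
  have hramp : ∀ j : Fin (n + 1), max ((n + 1 : ℤ) - j.val) 0 = (n + 1 : ℤ) - j.val := fun j =>
    max_eq_left (by have := j.isLt; omega)
  simp only [leafedCyclePotential, hramp, sub_mul, sum_sub_distrib, ← mul_sum,
    Int.mul_ediv_cancel' hc]
  ring

theorem leafedCyclePotential_second_diff (c : Fin (n + 1) → ℤ) (i : Fin (n + 1)) :
    2 * leafedCyclePotential c i - leafedCyclePotential c (i + 1) -
      leafedCyclePotential c (i - 1) = c i := by
  have hramp : ∀ j : Fin (n + 1), 2 * max ((i : ℤ) - j) 0 - max ((i : ℤ) + 1 - j) 0 -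
      max ((i : ℤ) - 1 - j) 0 = if i = j then -1 else 0 := fun j => by
    simp only [Fin.ext_iff]
    split_ifs <;> omega
  have key : ∑ j : Fin (n + 1), (2 * max ((i : ℤ) - j) 0 - max ((i : ℤ) + 1 - j) 0 -
      max ((i : ℤ) - 1 - j) 0) * c j = - c i := by
    simp [hramp]
  simp only [sub_mul, mul_assoc, sum_sub_distrib, ← mul_sum] at key
  simp only [leafedCyclePotential]
  linear_combination -key

theorem leafedCycleLaplacianMinor_mulVec_potential (hn : 2 ≤ n) (c : Fin (n + 1) → ℤ)
    (hc : (n + 1 : ℤ) ∣ ∑ j, (j.val : ℤ) * c j) :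
    leafedCycleLaplacianMinor (n + 1) *ᵥ (fun i => leafedCyclePotential c i) = c := by
  set v : Fin (n + 1) → ℤ := fun i => leafedCyclePotential c i
  have hoff : ∀ i ≠ 0, (leafedCycleLaplacianMinor (n + 1) *ᵥ v) i = c i := by
    intro i hi
    have hnext : v (i + 1) = leafedCyclePotential c (i + 1) := by
      by_cases h : i = Fin.last n
      · simp [v, h, leafedCyclePotential_zero, leafedCyclePotential_card c hc]
      · simp [v, Fin.val_add_one, h]
    have hprev : v (i - 1) = leafedCyclePotential c (i - 1) := by
      have : 1 ≤ i.val := Nat.one_le_iff_ne_zero.2 (Fin.val_ne_zero_iff.2 hi)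
      simp [v, Fin.coe_sub_one, hi, this]
    rw [leafedCycleLaplacianMinor_mulVec hn, if_neg hi, add_zero, hnext, hprev]
    exact leafedCyclePotential_second_diff c i
  -- the equation at vertex `0` follows from the others, since both sides sum to `∑ c`
  have hsum := sum_leafedCycleLaplacianMinor_mulVec hn v
  rw [Fintype.sum_eq_add_sum_compl 0, sum_congr rfl fun j hj => hoff j (by simpa using hj),
    show v 0 = ∑ j, c j from leafedCyclePotential_zero c, Fintype.sum_eq_add_sum_compl 0 c,
    add_left_inj] at hsum
  ext i
  rcases eq_or_ne i 0 with rfl | hi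
  · exact hsum
  · exact hoff i hi

theorem ncard_leafedCycleCone (hn : 2 ≤ n) (m : ℕ) :
    {v : Fin (n + 1) → ℤ |
        (∀ i, 0 ≤ (leafedCycleLaplacianMinor (n + 1) *ᵥ v) i) ∧ v 0 = m}.ncard =
      Nat.card {c : Fin (n + 1) → ℕ // ∑ j, c j = m ∧ n + 1 ∣ ∑ j, j.val * c j} := by
  set B := {c : Fin (n + 1) → ℕ | ∑ j, c j = m ∧ n + 1 ∣ ∑ j, j.val * c j}
  set Φ : (Fin (n + 1) → ℕ) → Fin (n + 1) → ℤ :=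
    fun c i => leafedCyclePotential (fun j => (c j : ℤ)) i
  have hΦ : ∀ c ∈ B, leafedCycleLaplacianMinor (n + 1) *ᵥ Φ c = fun j => (c j : ℤ) :=
    fun c hc => leafedCycleLaplacianMinor_mulVec_potential hn _ (by exact_mod_cast hc.2)
  have himage :
      Φ '' B = {v | (∀ i, 0 ≤ (leafedCycleLaplacianMinor (n + 1) *ᵥ v) i) ∧ v 0 = m} := by
    ext v
    constructor
    · rintro ⟨c, hc, rfl⟩
      refine ⟨fun i => by simp [hΦ c hc], ?_⟩
      simp [Φ, leafedCyclePotential_zero, ← hc.1]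
    · rintro ⟨hpos, h0⟩
      set c : Fin (n + 1) → ℕ := fun i => ((leafedCycleLaplacianMinor (n + 1) *ᵥ v) i).toNat
      have hc : (fun j => (c j : ℤ)) = leafedCycleLaplacianMinor (n + 1) *ᵥ v :=
        funext fun i => Int.toNat_of_nonneg (hpos i)
      have hcB : c ∈ B := by
        constructor
        · have := sum_leafedCycleLaplacianMinor_mulVec hn v
          rw [← hc, h0] at this
          beta_reduce at this
          exact_mod_cast this
        · have := sum_val_mul_leafedCycleLaplacianMinor_mulVec hn v
          rw [← hc] at this
          beta_reduce at this
          exact_mod_cast Dvd.intro _ this.symm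
      exact ⟨c, hcB, leafedCycleLaplacianMinor_mulVec_injective hn ((hΦ c hcB).trans hc)⟩
  have hinj : Set.InjOn Φ B := fun c hc d hd h => by
    have := (hΦ c hc).symm.trans ((congrArg _ h).trans (hΦ d hd))
    exact funext fun j => by exact_mod_cast congrFun this j
  rw [← himage, hinj.ncard_image, ← Nat.card_coe_set_eq]
  rfl

end LeafedCycle

/-- For `n` prime and `gcd(m, n) = 1`, the number of integer points of
the leafed `n`-cycle cone with first coordinate `m` equals the number of cyclic
equivalence classes of compositions of `m` into `n` nonnegative parts. -/
theorem leafed_cycle_cyclically_distinct (n : ℕ) (hn : 3 ≤ n)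
    (m : ℕ) (hnm : Nat.gcd m n = 1) :
    {lam : Fin n → ℤ |
        (∀ i, 0 ≤ (leafedCycleLaplacianMinor n).mulVec lam i) ∧
        lam ⟨0, by omega⟩ = (m : ℤ)}.ncard =
      Nat.card (Quot (fun c c' : {c : Fin n → ℕ // ∑ j, c j = m} =>
        ∃ k : Fin n, ∀ j, c'.1 j = c.1 (j + k))) := by
  obtain ⟨n, rfl⟩ : ∃ k, n = k + 1 := ⟨n - 1, by omega⟩
  exact (ncard_leafedCycleCone (by omega) m).trans (card_balanced_eq_card_quot_cyclicShift m hnm)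
end
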